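/- Let $V$ be a finite-dimensional vector space and let $B$ be a set of $m$-dimensional subspaces of $V$ and $C$ a set of $(m-1)$-dimensional subspaces of $V$ (with $1 \le m \le \dim V$), both nonempty, satisfying: (1) for every $c \in C$, every $m$-dimensional subspace containing $c$ lies in $B$; (2) for every $b \in B$, every $(m-1)$-dimensional subspace contained in $b$ lies in $C$. Then $B$ consists of all $m$-dimensional subspaces of $V$ and $C$ consists of all $(m-1)$-dimensional subspaces of $V$. -/
import Mathlib

open Module Submodule

lemma sup_span_finrank {K V : Type*} [Field K] [AddCommGroup V] [Module K V]
    [FiniteDimensional K V] {c : Submodule K V} {v : V} (hv : v ∉ c) :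
    finrank K ↥(c ⊔ span K {v}) = finrank K c + 1 := by
  have hv0 : v ≠ 0 := fun h => hv (h ▸ c.zero_mem)
  have hd : Disjoint c (span K {v}) := by
    rw [disjoint_span_singleton]
    intro h; exact absurd h hv
  have := Submodule.finrank_sup_add_finrank_inf_eq c (span K {v})
  rw [hd.eq_bot, finrank_bot, add_zero, finrank_span_singleton hv0] at this
  exact this

lemma exists_between_subm {K V : Type*} [Field K] [AddCommGroup V] [Module K V]
    [FiniteDimensional K V] :
    ∀ (k : ℕ) (c b : Submodule K V), c ≤ b → finrank K c + k ≤ finrank K b →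
      ∃ W : Submodule K V, c ≤ W ∧ W ≤ b ∧ finrank K W = finrank K c + k := by
  intro k
  induction k with
  | zero => exact fun c b hcb _ => ⟨c, le_rfl, hcb, by simp⟩
  | succ k ih =>
    intro c b hcb h
    have hlt : c < b := by
      rcases lt_or_eq_of_le hcb with h' | h'
      · exact h'
      · subst h'; omega
    obtain ⟨v, hvb, hvc⟩ := SetLike.exists_of_lt hlt
    have hfr : finrank K ↥(c ⊔ span K {v}) = finrank K c + 1 := sup_span_finrank hvc
    have hle : c ⊔ span K {v} ≤ b := sup_le hcb ((span_singleton_le_iff_mem v b).mpr hvb)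
    obtain ⟨W, h1, h2, h3⟩ := ih (c ⊔ span K {v}) b hle (by omega)
    exact ⟨W, le_trans le_sup_left h1, h2, by omega⟩

/-- Lemma 3.7 (twoCondLemma): if `B` is a set of `m`-dimensional subspaces and `C` a set
of `(m-1)`-dimensional subspaces of a finite-dimensional vector space `V`, both nonempty,
such that every `m`-dimensional subspace containing a member of `C` lies in `B` and every
`(m-1)`-dimensional subspace contained in a member of `B` lies in `C`, then `B` is all
`m`-dimensional subspaces and `C` is all `(m-1)`-dimensional subspaces. -/
theorem stmt0 {K V : Type*} [Field K] [AddCommGroup V] [Module K V]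
    [FiniteDimensional K V] (m : ℕ) (hm1 : 1 ≤ m) (hmn : m ≤ Module.finrank K V)
    (B C : Set (Submodule K V))
    (hB : B ⊆ {W : Submodule K V | Module.finrank K W = m})
    (hC : C ⊆ {W : Submodule K V | Module.finrank K W = m - 1})
    (hBne : B.Nonempty) (hCne : C.Nonempty)
    (h1 : ∀ c ∈ C, ∀ b : Submodule K V, Module.finrank K b = m → c ≤ b → b ∈ B)
    (h2 : ∀ b ∈ B, ∀ c : Submodule K V, Module.finrank K c = m - 1 → c ≤ b → c ∈ C) :
    B = {W : Submodule K V | Module.finrank K W = m} ∧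
      C = {W : Submodule K V | Module.finrank K W = m - 1} := by
  have key : ∀ k : ℕ, ∀ b ∈ B, ∀ b' : Submodule K V, finrank K b' = m →
      m ≤ finrank K ↥(b ⊓ b') + k → b' ∈ B := by
    intro k
    induction k with
    | zero =>
      intro b hb b' hb' hk
      have hbm : finrank K b = m := hB hb
      simp only [add_zero] at hk
      have e1 : b ⊓ b' = b' := Submodule.eq_of_le_of_finrank_le inf_le_right (by omega)
      have e2 : b ⊓ b' = b := Submodule.eq_of_le_of_finrank_le inf_le_left (by omega)
      rwa [← e1, e2]
    | succ k ih =>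
      intro b hb b' hb' hk
      have hbm : finrank K b = m := hB hb
      by_cases hcase : m ≤ finrank K ↥(b ⊓ b') + k
      · exact ih b hb b' hb' hcase
      have hd : finrank K ↥(b ⊓ b') + k + 1 = m := by omega
      have hnle : ¬ b' ≤ b := by
        intro hle
        have : b ⊓ b' = b' := inf_eq_right.mpr hle
        rw [this] at hd; omega
      obtain ⟨v, hvb', hvb⟩ := SetLike.not_le_iff_exists.mp hnle
      obtain ⟨c, hc1, hc2, hc3⟩ := exists_between_subm (m - 1 - finrank K ↥(b ⊓ b'))
        (b ⊓ b') b inf_le_left (by omega)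
      have hcm : finrank K c = m - 1 := by omega
      have hcC : c ∈ C := h2 b hb c hcm hc2
      have hvc : v ∉ c := fun h => hvb (hc2 h)
      have hb''m : finrank K ↥(c ⊔ span K {v}) = m := by
        rw [sup_span_finrank hvc]; omega
      have hb''B : c ⊔ span K {v} ∈ B := h1 c hcC _ hb''m le_sup_left
      have hvi : v ∉ b ⊓ b' := fun h => hvb h.1
      have hsub : (b ⊓ b') ⊔ span K {v} ≤ (c ⊔ span K {v}) ⊓ b' :=
        le_inf (sup_le (hc1.trans le_sup_left) le_sup_right)
          (sup_le inf_le_right ((span_singleton_le_iff_mem v b').mpr hvb'))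
      have hfr : finrank K ↥((b ⊓ b') ⊔ span K {v}) = finrank K ↥(b ⊓ b') + 1 :=
        sup_span_finrank hvi
      have hmono := Submodule.finrank_mono hsub
      exact ih _ hb''B b' hb' (by omega)
  obtain ⟨b0, hb0⟩ := hBne
  have hBfull : B = {W : Submodule K V | Module.finrank K W = m} := by
    apply Set.Subset.antisymm hB
    intro W hW
    exact key m b0 hb0 W hW (by omega)
  refine ⟨hBfull, Set.Subset.antisymm hC ?_⟩
  intro c' hc'
  have hc'm : finrank K c' = m - 1 := hc'
  obtain ⟨b', hb1, _, hb3⟩ := exists_between_subm (m - finrank K c') c' ⊤ le_top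
    (by rw [finrank_top]; omega)
  have hb'm : finrank K b' = m := by omega
  have hb'B : b' ∈ B := by rw [hBfull]; exact hb'm
  exact h2 b' hb'B c' hc'm hb1
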